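/- Let ε > 0, p ∈ [1,∞], let X and Y be ℝ^d-valued random vectors defined on a common probability space with ‖X − Y‖_p < ε almost surely, and let 𝒜 be a countable measurable partition of ℝ^d. Suppose there is an integer Δ ≥ 0 such that every A ∈ 𝒜 satisfies #{B ∈ 𝒜 : B ≠ A and inf{‖x − y‖_p : x ∈ A, y ∈ B} < ε} ≤ Δ. Then |𝔈_𝒜(X) − 𝔈_𝒜(Y)| ≤ log₂(Δ + 1). -/

import Mathlib

/-!
With `P n m = μ (X ∈ A n, Y ∈ A m)`, almost sure closeness of `X` and `Y` means that for each
`m` the fibre `P · m` is supported on `m` and the at most `Δ` cells near `A m`. Hence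
`H(X) ≤ H(X, Y) = H(Y) + H(X | Y) ≤ H(Y) + log₂ (Δ + 1)`, the last step being Jensen's inequality
on each fibre, and symmetrically with `X` and `Y` exchanged. Entropies are compared in `ℝ≥0∞`,
so that the case of infinite entropy (where both real series are junk `0`) is covered too.
-/

open MeasureTheory
open scoped ENNReal

/-- The `ℓ_p` norm of a vector of `ℝ^d`, for `p ∈ [1,∞]` (`p = ∞` gives the sup-norm). -/
noncomputable def lpNorm {d : ℕ} (p : ℝ≥0∞) (x : Fin d → ℝ) : ℝ :=
  if p = ∞ then ⨆ i, |x i| else (∑ i, |x i| ^ p.toReal) ^ (1 / p.toReal)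

/-- The entropy summand `t ↦ t·log₂(1/t)` (equal to `0` at `t = 0`). -/
noncomputable def entTerm (t : ℝ) : ℝ := t * Real.logb 2 (1 / t)

open Real

lemma entTerm_eq_negMulLog_div (t : ℝ) : entTerm t = negMulLog t / log 2 := by
  rw [entTerm, logb, negMulLog, one_div, log_inv]
  ring

lemma entTerm_nonneg {t : ℝ} (h0 : 0 ≤ t) (h1 : t ≤ 1) : 0 ≤ entTerm t := by
  rw [entTerm_eq_negMulLog_div]
  exact div_nonneg (negMulLog_nonneg h0 h1) (log_nonneg one_le_two)

namespace Real

lemma sum_negMulLog_le {ι : Type*} (s : Finset ι) (h : ι → ℝ) (h0 : ∀ i ∈ s, 0 ≤ h i) :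
    ∑ i ∈ s, negMulLog (h i) ≤ negMulLog (∑ i ∈ s, h i) + (∑ i ∈ s, h i) * log s.card := by
  rcases s.eq_empty_or_nonempty with rfl | hs
  · simp
  have hk : (0 : ℝ) < s.card := by exact_mod_cast hs.card_pos
  have hjensen := concaveOn_negMulLog.le_map_sum (t := s) (w := fun _ ↦ (s.card : ℝ)⁻¹) (p := h)
    (fun _ _ ↦ by positivity) (by simp [hk.ne']) h0
  simp only [smul_eq_mul, ← Finset.mul_sum, negMulLog_mul] at hjensen
  have hinv : negMulLog (s.card : ℝ)⁻¹ = (s.card : ℝ)⁻¹ * log s.card := by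
    simp [negMulLog, log_inv]
  rw [hinv] at hjensen
  have := mul_le_mul_of_nonneg_left hjensen hk.le
  field_simp at this
  linarith

end Real

lemma sum_entTerm_le {ι : Type*} (s : Finset ι) (h : ι → ℝ) (h0 : ∀ i ∈ s, 0 ≤ h i) :
    ∑ i ∈ s, entTerm (h i) ≤ entTerm (∑ i ∈ s, h i) + (∑ i ∈ s, h i) * logb 2 s.card := by
  simp only [entTerm_eq_negMulLog_div, ← Finset.sum_div, logb, mul_div_assoc', ← add_div]
  gcongr
  exact sum_negMulLog_le s h h0

namespace ENNReal

lemma ofReal_entTerm_toReal {t : ℝ≥0∞} (ht : t ≠ ∞) :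
    ENNReal.ofReal (entTerm t.toReal) = t * ENNReal.ofReal (logb 2 (1 / t.toReal)) := by
  rw [entTerm, ENNReal.ofReal_mul toReal_nonneg, ofReal_toReal ht]

lemma ofReal_entTerm_tsum_le {ι : Type*} (h : ι → ℝ≥0∞) (hfin : ∑' i, h i ≠ ∞) :
    ENNReal.ofReal (entTerm (∑' i, h i).toReal) ≤ ∑' i, ENNReal.ofReal (entTerm (h i).toReal) := by
  rw [ofReal_entTerm_toReal hfin, ← ENNReal.tsum_mul_right]
  refine ENNReal.tsum_le_tsum fun i ↦ ?_
  have hle : h i ≤ ∑' i, h i := ENNReal.le_tsum i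
  rcases eq_or_ne (h i) 0 with hi | hi
  · simp [hi]
  rw [ofReal_entTerm_toReal (ne_top_of_le_ne_top hfin hle)]
  refine mul_le_mul_right (ENNReal.ofReal_le_ofReal ?_) _
  have hpos : 0 < (h i).toReal := toReal_pos hi (ne_top_of_le_ne_top hfin hle)
  have hle' : (h i).toReal ≤ (∑' i, h i).toReal := toReal_mono hfin hle
  exact logb_le_logb_of_le (b := 2) (by norm_num) (one_div_pos.mpr (hpos.trans_le hle'))
    (one_div_le_one_div_of_le hpos hle')

lemma tsum_ofReal_entTerm_le {ι : Type*} (h : ι → ℝ≥0∞) (h1 : ∑' i, h i ≤ 1) (K : ℕ)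
    (hK : {i | h i ≠ 0}.encard ≤ K) :
    ∑' i, ENNReal.ofReal (entTerm (h i).toReal)
      ≤ ENNReal.ofReal (entTerm (∑' i, h i).toReal) + (∑' i, h i) * ENNReal.ofReal (logb 2 K) := by
  have hsupp : {i | h i ≠ 0}.Finite := Set.finite_of_encard_le_coe hK
  set S := hsupp.toFinset
  have hS : ∀ i ∉ S, h i = 0 := by simp [S]
  have hcard : S.card ≤ K := by
    rwa [← Nat.cast_le (α := ℕ∞), ← hsupp.encard_eq_coe_toFinset_card]
  have hfin : ∀ i, h i ≠ ∞ := fun i ↦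
    ne_top_of_le_ne_top one_ne_top ((ENNReal.le_tsum i).trans h1)
  have hterm : ∀ i, 0 ≤ entTerm (h i).toReal := fun i ↦ entTerm_nonneg toReal_nonneg
    (toReal_le_of_le_ofReal zero_le_one (by simpa using (ENNReal.le_tsum i).trans h1))
  have hlog : logb 2 S.card ≤ logb 2 K := by
    rcases Nat.eq_zero_or_pos S.card with h0 | hpos
    · rw [h0, Nat.cast_zero, logb_zero]
      exact div_nonneg (log_natCast_nonneg K) (log_nonneg one_le_two)
    · exact logb_le_logb_of_le (b := 2) (by norm_num) (by exact_mod_cast hpos)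
        (by exact_mod_cast hcard)
  rw [tsum_eq_sum (s := S) fun i hi ↦ by simp [hS i hi, entTerm],
    tsum_eq_sum (s := S) hS, ← ofReal_sum_of_nonneg fun i _ ↦ hterm i,
    toReal_sum fun i _ ↦ hfin i]
  calc ENNReal.ofReal (∑ i ∈ S, entTerm (h i).toReal)
      ≤ ENNReal.ofReal (entTerm (∑ i ∈ S, (h i).toReal)
          + (∑ i ∈ S, (h i).toReal) * logb 2 K) := by
        gcongr
        refine (sum_entTerm_le S _ fun _ _ ↦ toReal_nonneg).trans ?_
        gcongr
    _ ≤ _ := by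
        rw [← toReal_sum fun i _ ↦ hfin i]
        refine ofReal_add_le.trans_eq ?_
        rw [ENNReal.ofReal_mul toReal_nonneg, ofReal_toReal (sum_ne_top.mpr fun i _ ↦ hfin i)]

lemma abs_toReal_sub_toReal_le {a b c : ℝ≥0∞} (hc : c ≠ ∞) (hab : a ≤ b + c)
    (hba : b ≤ a + c) : |a.toReal - b.toReal| ≤ c.toReal := by
  rcases eq_or_ne a ∞ with rfl | ha
  · have hb : b = ∞ := by simpa [hc] using hab
    simp [hb]
  have hb : b ≠ ∞ := ne_top_of_le_ne_top (add_ne_top.mpr ⟨ha, hc⟩) hba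
  have hab' := toReal_mono (add_ne_top.mpr ⟨hb, hc⟩) hab
  have hba' := toReal_mono (add_ne_top.mpr ⟨ha, hc⟩) hba
  rw [toReal_add hb hc] at hab'
  rw [toReal_add ha hc] at hba'
  exact abs_sub_le_iff.mpr ⟨by linarith, by linarith⟩

end ENNReal

noncomputable def ennEntropy {ι : Type*} (q : ι → ℝ≥0∞) : ℝ≥0∞ :=
  ∑' i, ENNReal.ofReal (entTerm (q i).toReal)

lemma ennEntropy_toReal {ι : Type*} {q : ι → ℝ≥0∞} (hq : ∀ i, q i ≤ 1) :
    (ennEntropy q).toReal = ∑' i, entTerm (q i).toReal := by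
  rw [ennEntropy, ENNReal.tsum_toReal_eq fun _ ↦ ENNReal.ofReal_ne_top]
  refine tsum_congr fun i ↦ ENNReal.toReal_ofReal (entTerm_nonneg ENNReal.toReal_nonneg ?_)
  exact ENNReal.toReal_le_of_le_ofReal zero_le_one (by simpa using hq i)

lemma ennEntropy_le_of_fiber_encard_le {ι κ : Type*} (P : ι → κ → ℝ≥0∞)
    (hP : ∑' i, ∑' j, P i j = 1) (K : ℕ) (hK : ∀ j, {i | P i j ≠ 0}.encard ≤ K) :
    ennEntropy (fun i ↦ ∑' j, P i j)
      ≤ ennEntropy (fun j ↦ ∑' i, P i j) + ENNReal.ofReal (logb 2 K) := by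
  have hrow : ∀ i, ∑' j, P i j ≠ ∞ := fun i ↦
    ne_top_of_le_ne_top (hP ▸ ENNReal.one_ne_top) (ENNReal.le_tsum i)
  have hP' : ∑' j, ∑' i, P i j = 1 := ENNReal.tsum_comm.trans hP
  calc ennEntropy (fun i ↦ ∑' j, P i j)
      ≤ ∑' i, ∑' j, ENNReal.ofReal (entTerm (P i j).toReal) :=
        ENNReal.tsum_le_tsum fun i ↦ ENNReal.ofReal_entTerm_tsum_le _ (hrow i)
    _ = ∑' j, ∑' i, ENNReal.ofReal (entTerm (P i j).toReal) := ENNReal.tsum_comm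
    _ ≤ ∑' j, (ENNReal.ofReal (entTerm (∑' i, P i j).toReal)
          + (∑' i, P i j) * ENNReal.ofReal (logb 2 K)) :=
        ENNReal.tsum_le_tsum fun j ↦ ENNReal.tsum_ofReal_entTerm_le _
          (hP' ▸ ENNReal.le_tsum j) K (hK j)
    _ = ennEntropy (fun j ↦ ∑' i, P i j) + ENNReal.ofReal (logb 2 K) := by
        rw [ENNReal.tsum_add, ENNReal.tsum_mul_right, hP', one_mul, ennEntropy]

lemma measure_eq_tsum_inter {Ω ι : Type*} [MeasurableSpace Ω] [Countable ι] (μ : Measure Ω)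
    {s : Set Ω} (hs : MeasurableSet s) {B : ι → Set Ω} (hBmeas : ∀ i, MeasurableSet (B i))
    (hBdisj : Pairwise (Function.onFun Disjoint B)) (hBcover : ⋃ i, B i = Set.univ) :
    μ s = ∑' i, μ (s ∩ B i) := by
  have hdisj : Pairwise (Function.onFun Disjoint fun i ↦ s ∩ B i) := fun i j hij ↦
    (hBdisj hij).mono Set.inter_subset_right Set.inter_subset_right
  rw [← measure_iUnion hdisj fun i ↦ hs.inter (hBmeas i), ← Set.inter_iUnion, hBcover,
    Set.inter_univ]

lemma ennEntropy_preimage_le {Ω α ι : Type*} [MeasurableSpace Ω] [MeasurableSpace α]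
    [Countable ι] (μ : Measure Ω) [IsProbabilityMeasure μ] (X Y : Ω → α)
    (hX : Measurable X) (hY : Measurable Y) (near : α → α → Prop)
    (hnear : ∀ᵐ ω ∂μ, near (Y ω) (X ω)) (A : ι → Set α) (hAmeas : ∀ n, MeasurableSet (A n))
    (hAdisj : Pairwise (Function.onFun Disjoint A)) (hAcover : ⋃ n, A n = Set.univ) (Δ : ℕ)
    (hΔ : ∀ m, {n | n ≠ m ∧ ∃ y ∈ A m, ∃ x ∈ A n, near y x}.encard ≤ Δ) :
    ennEntropy (fun n ↦ μ (X ⁻¹' A n))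
      ≤ ennEntropy (fun n ↦ μ (Y ⁻¹' A n)) + ENNReal.ofReal (logb 2 (Δ + 1)) := by
  have hcover : ∀ Z : Ω → α, ⋃ n, Z ⁻¹' A n = Set.univ := fun Z ↦ by
    rw [← Set.preimage_iUnion, hAcover, Set.preimage_univ]
  have hdisj : ∀ Z : Ω → α, Pairwise (Function.onFun Disjoint fun n ↦ Z ⁻¹' A n) :=
    fun Z i j hij ↦ (hAdisj hij).preimage Z
  have hrow : ∀ n, μ (X ⁻¹' A n) = ∑' m, μ (X ⁻¹' A n ∩ Y ⁻¹' A m) := fun n ↦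
    measure_eq_tsum_inter μ (hX (hAmeas n)) (fun m ↦ hY (hAmeas m)) (hdisj Y) (hcover Y)
  have hcol : ∀ m, μ (Y ⁻¹' A m) = ∑' n, μ (X ⁻¹' A n ∩ Y ⁻¹' A m) := fun m ↦ by
    simp_rw [Set.inter_comm _ (Y ⁻¹' A m)]
    exact measure_eq_tsum_inter μ (hY (hAmeas m)) (fun n ↦ hX (hAmeas n)) (hdisj X) (hcover X)
  have htotal : ∑' n, μ (X ⁻¹' A n) = 1 := by
    simpa using (measure_eq_tsum_inter μ MeasurableSet.univ (fun n ↦ hX (hAmeas n))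
      (hdisj X) (hcover X)).symm
  have hfiber : ∀ m, {n | μ (X ⁻¹' A n ∩ Y ⁻¹' A m) ≠ 0}
      ⊆ insert m {n | n ≠ m ∧ ∃ y ∈ A m, ∃ x ∈ A n, near y x} := by
    intro m n hn
    by_contra hfar
    simp only [Set.mem_insert_iff, Set.mem_ofPred_eq, not_or, not_and, not_exists,
      not_and] at hfar
    refine hn (measure_mono_null (fun ω hω ↦ ?_) (ae_iff.mp hnear))
    exact hfar.2 hfar.1 (Y ω) hω.2 (X ω) hω.1
  simp_rw [hrow] at htotal ⊢
  simp_rw [hcol]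
  have hfiber_card : ∀ m, {n | μ (X ⁻¹' A n ∩ Y ⁻¹' A m) ≠ 0}.encard ≤ (Δ + 1 : ℕ) := fun m ↦
    calc _ ≤ _ := Set.encard_le_encard (hfiber m)
      _ ≤ _ := Set.encard_insert_le _ _
      _ ≤ (Δ + 1 : ℕ) := by push_cast; gcongr; exact hΔ m
  exact_mod_cast ennEntropy_le_of_fiber_encard_le _ htotal (Δ + 1) hfiber_card

lemma lpNorm_sub_comm {d : ℕ} (p : ℝ≥0∞) (x y : Fin d → ℝ) :
    lpNorm p (x - y) = lpNorm p (y - x) := by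
  simp only [_root_.lpNorm, Pi.sub_apply, abs_sub_comm (x _)]

theorem partition_entropy_close_general
    {Ω : Type} [MeasurableSpace Ω] (μ : Measure Ω) [IsProbabilityMeasure μ]
    {d : ℕ} (p : ℝ≥0∞) (ε : ℝ)
    (X Y : Ω → (Fin d → ℝ)) (hX : Measurable X) (hY : Measurable Y)
    (hclose : ∀ᵐ ω ∂μ, lpNorm p (X ω - Y ω) < ε)
    (A : ℕ → Set (Fin d → ℝ)) (hAmeas : ∀ n, MeasurableSet (A n))
    (hAdisj : Pairwise (Function.onFun Disjoint A)) (hAcover : ⋃ n, A n = Set.univ)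
    (Δ : ℕ)
    (hΔ : ∀ n : ℕ,
      {m : ℕ | m ≠ n ∧ ∃ x ∈ A n, ∃ y ∈ A m, lpNorm p (x - y) < ε}.encard ≤ (Δ : ℕ∞)) :
    |(∑' n : ℕ, entTerm (μ (X ⁻¹' A n)).toReal)
        - ∑' n : ℕ, entTerm (μ (Y ⁻¹' A n)).toReal| ≤ Real.logb 2 (Δ + 1) := by
  have hclose' : ∀ᵐ ω ∂μ, lpNorm p (Y ω - X ω) < ε := by
    filter_upwards [hclose] with ω h
    rwa [lpNorm_sub_comm]
  have hXY := ennEntropy_preimage_le μ X Y hX hY (fun y x ↦ lpNorm p (y - x) < ε) hclose'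
    A hAmeas hAdisj hAcover Δ hΔ
  have hYX := ennEntropy_preimage_le μ Y X hY hX (fun y x ↦ lpNorm p (y - x) < ε) hclose
    A hAmeas hAdisj hAcover Δ hΔ
  have hlog : 0 ≤ Real.logb 2 (Δ + 1) :=
    Real.logb_nonneg one_lt_two (by linarith [Nat.cast_nonneg (α := ℝ) Δ])
  rw [← ennEntropy_toReal fun _ ↦ prob_le_one, ← ennEntropy_toReal fun _ ↦ prob_le_one,
    ← ENNReal.toReal_ofReal hlog]
  exact ENNReal.abs_toReal_sub_toReal_le ENNReal.ofReal_ne_top hXY hYX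

/-- if `‖X − Y‖_p < ε` a.s. and `𝒜` is a countable measurable partition of
`ℝ^d` such that each cell has at most `Δ` other cells at `ℓ_p`-distance `< ε`
(`inf{‖x−y‖_p : x ∈ A, y ∈ B} < ε` iff some pair `x ∈ A`, `y ∈ B` has `‖x−y‖_p < ε`),
then `|𝔈_𝒜(X) − 𝔈_𝒜(Y)| ≤ log₂(Δ + 1)`. -/
theorem partition_entropy_close
    {Ω : Type} [MeasurableSpace Ω] (μ : Measure Ω) [IsProbabilityMeasure μ]
    {d : ℕ} (p : ℝ≥0∞) (hp : 1 ≤ p) (ε : ℝ) (hε : 0 < ε)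
    (X Y : Ω → (Fin d → ℝ)) (hX : Measurable X) (hY : Measurable Y)
    (hclose : ∀ᵐ ω ∂μ, lpNorm p (X ω - Y ω) < ε)
    (A : ℕ → Set (Fin d → ℝ)) (hAmeas : ∀ n, MeasurableSet (A n))
    (hAdisj : Pairwise (Function.onFun Disjoint A)) (hAcover : ⋃ n, A n = Set.univ)
    (Δ : ℕ)
    (hΔ : ∀ n : ℕ,
      {m : ℕ | m ≠ n ∧ ∃ x ∈ A n, ∃ y ∈ A m, lpNorm p (x - y) < ε}.encard ≤ (Δ : ℕ∞)) :
    |(∑' n : ℕ, entTerm (μ (X ⁻¹' A n)).toReal)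
        - ∑' n : ℕ, entTerm (μ (Y ⁻¹' A n)).toReal| ≤ Real.logb 2 (Δ + 1) :=
  partition_entropy_close_general μ p ε X Y hX hY hclose A hAmeas hAdisj hAcover Δ hΔ
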